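/- The cyclic statistics des and cdes are equivalent: for all permutations π and σ of the same length, the multiset {{des π̄ : π̄ ∈ [π]}} equals the multiset {{des σ̄ : σ̄ ∈ [σ]}} if and only if cdes π = cdes σ. -/
import Mathlib


/-- A permutation: a list of distinct positive integers. -/
def IsPerm (π : List ℕ) : Prop := π.Nodup ∧ ∀ x ∈ π, 0 < x

/-- The descent set `Des π = {i ∈ {1,…,n−1} : π_i > π_{i+1}}` (1-based indexing). -/
def Des (π : List ℕ) : Finset ℕ :=
  (Finset.Icc 1 (π.length - 1)).filter fun i => π.getD i 0 < π.getD (i - 1) 0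

/-- The descent number. -/
def des (π : List ℕ) : ℕ := (Des π).card

/-- The major index. -/
def maj (π : List ℕ) : ℕ := ∑ i ∈ Des π, i

/-- The cyclic descent set `cDes π = {i ∈ {1,…,n} : π_i > π_{i+1}}`, indices mod `n`. -/
def cDes (π : List ℕ) : Finset ℕ :=
  (Finset.Icc 1 π.length).filter fun i => π.getD (i % π.length) 0 < π.getD (i - 1) 0

/-- The cyclic descent number. -/
def cdes (π : List ℕ) : ℕ := (cDes π).card

/-- The cyclic major index. -/
def cmaj (π : List ℕ) : ℕ := ∑ i ∈ cDes π, i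

/-- The peak set `Pk π = {i ∈ {2,…,n−1} : π_{i−1} < π_i > π_{i+1}}` (1-based indexing). -/
def Pk (π : List ℕ) : Finset ℕ :=
  (Finset.Icc 2 (π.length - 1)).filter fun i =>
    π.getD (i - 2) 0 < π.getD (i - 1) 0 ∧ π.getD i 0 < π.getD (i - 1) 0

/-- The peak number. -/
def pk (π : List ℕ) : ℕ := (Pk π).card

/-- The cyclic peak set `cPk π = {i ∈ {1,…,n} : π_{i−1} < π_i > π_{i+1}}`, indices mod `n`. -/
def cPk (π : List ℕ) : Finset ℕ :=
  (Finset.Icc 1 π.length).filter fun i =>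
    π.getD ((i + π.length - 2) % π.length) 0 < π.getD (i - 1) 0 ∧
      π.getD (i % π.length) 0 < π.getD (i - 1) 0

/-- The cyclic peak number. -/
def cpk (π : List ℕ) : ℕ := (cPk π).card

/-- The cyclic valley set `cVal π = {i ∈ {1,…,n} : π_{i−1} > π_i < π_{i+1}}`, indices mod `n`. -/
def cVal (π : List ℕ) : Finset ℕ :=
  (Finset.Icc 1 π.length).filter fun i =>
    π.getD (i - 1) 0 < π.getD ((i + π.length - 2) % π.length) 0 ∧
      π.getD (i - 1) 0 < π.getD (i % π.length) 0

/-- The cyclic valley number. -/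
def cval (π : List ℕ) : ℕ := (cVal π).card

/-- The distribution of a linear statistic `st` over the `n` rotations of `π`,
i.e. the multiset-valued cyclic statistic induced by `st`, evaluated at `[π]`. -/
def cycStat {A : Type*} (st : List ℕ → A) (π : List ℕ) : Multiset A :=
  (Multiset.range π.length).map fun i => st (π.rotate i)

/-- `τ` is a (linear) shuffle of `π` and `σ`. -/
def IsShuffle (π σ τ : List ℕ) : Prop :=
  π.Sublist τ ∧ σ.Sublist τ ∧ τ.length = π.length + σ.length

/-- `[τ]` is a cyclic shuffle of `[π]` and `[σ]`: some rotation of `τ` is a shuffle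
of some rotation of `π` and some rotation of `σ`. -/
def IsCyclicShuffle (π σ τ : List ℕ) : Prop :=
  ∃ i j k, IsShuffle (π.rotate i) (σ.rotate j) (τ.rotate k)

/-- The set of cyclic shuffles of `[π]` and `[σ]` (as elements of `Cycle ℕ`, so that each
cyclic shuffle is counted once) on which the statistic `cst` takes the value `v`. -/
def cycShuffleFiber {A : Type*} (cst : List ℕ → A) (π σ : List ℕ) (v : A) : Set (Cycle ℕ) :=
  {c : Cycle ℕ | ∃ τ : List ℕ, (↑τ : Cycle ℕ) = c ∧ IsCyclicShuffle π σ τ ∧ cst τ = v}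

/-- A (rotation-invariant) statistic `cst` is cyclic shuffle-compatible if the distribution
of `cst` over the set of cyclic shuffles of `[π]` and `[σ]` (each cyclic shuffle counted
once) depends only on `cst π`, `cst σ`, `|π|` and `|σ|`. -/
def CyclicShuffleCompatible {A : Type*} (cst : List ℕ → A) : Prop :=
  ∀ π σ π' σ' : List ℕ, IsPerm π → IsPerm σ → IsPerm π' → IsPerm σ' →
    π.Disjoint σ → π'.Disjoint σ' →
    π.length = π'.length → σ.length = σ'.length →
    cst π = cst π' → cst σ = cst σ' →
    ∀ v : A, (cycShuffleFiber cst π σ v).ncard = (cycShuffleFiber cst π' σ' v).ncard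

/-- wrap indicator -/
def Wr (π : List ℕ) : ℕ := if π.getD 0 0 < π.getD (π.length - 1) 0 then 1 else 0

def cdes' (π : List ℕ) : ℕ :=
  ((Finset.range π.length).filter fun j => π.getD ((j + 1) % π.length) 0 < π.getD j 0).card

lemma cdes_eq_cdes' (π : List ℕ) : cdes π = cdes' π := by
  unfold cdes cdes' cDes
  apply Finset.card_bij (fun i _ => i - 1)
  · intro a ha
    simp only [Finset.mem_filter, Finset.mem_Icc, Finset.mem_range] at *
    obtain ⟨⟨h1, h2⟩, h3⟩ := ha
    refine ⟨by omega, ?_⟩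
    have : a - 1 + 1 = a := by omega
    rw [this]
    exact h3
  · intro a ha b hb h
    simp only [Finset.mem_filter, Finset.mem_Icc] at *
    omega
  · intro b hb
    simp only [Finset.mem_filter, Finset.mem_Icc, Finset.mem_range] at *
    exact ⟨b + 1, ⟨⟨by omega, by omega⟩, by simpa using hb.2⟩, by omega⟩

lemma getD_rotate (π : List ℕ) (k j : ℕ) (hj : j < π.length) :
    (π.rotate k).getD j 0 = π.getD ((j + k) % π.length) 0 := by
  have h1 : j < (π.rotate k).length := by rwa [List.length_rotate]
  have h2 : (j + k) % π.length < π.length := Nat.mod_lt _ (by omega)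
  rw [List.getD_eq_getElem _ _ h1, List.getD_eq_getElem _ _ h2, List.getElem_rotate]

lemma cdes'_rotate (π : List ℕ) (k : ℕ) : cdes' (π.rotate k) = cdes' π := by
  rcases Nat.eq_zero_or_pos π.length with h0 | h0
  · rw [List.eq_nil_of_length_eq_zero h0]; simp [List.rotate_nil]
  rw [← List.rotate_mod]
  set m := k % π.length with hm
  have hmlt : m < π.length := Nat.mod_lt _ h0
  unfold cdes'
  rw [List.length_rotate]
  apply Finset.card_bij (fun j _ => (j + m) % π.length)
  · intro a ha
    simp only [Finset.mem_filter, Finset.mem_range] at *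
    obtain ⟨h1, h2⟩ := ha
    refine ⟨Nat.mod_lt _ h0, ?_⟩
    rw [getD_rotate _ _ _ h1, getD_rotate _ _ _ (Nat.mod_lt _ h0)] at h2
    have e1 : ((a + 1) % π.length + m) % π.length = ((a + m) % π.length + 1) % π.length := by
      rw [Nat.mod_add_mod, Nat.mod_add_mod]; ring_nf
    rwa [e1] at h2
  · intro a ha b hb h
    simp only [Finset.mem_filter, Finset.mem_range] at *
    have : (a + m) % π.length = (b + m) % π.length := h
    have h2 : a % π.length = b % π.length := Nat.ModEq.add_right_cancel' m this
    rwa [Nat.mod_eq_of_lt ha.1, Nat.mod_eq_of_lt hb.1] at h2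
  · intro b hb
    simp only [Finset.mem_filter, Finset.mem_range] at *
    obtain ⟨h1, h2⟩ := hb
    refine ⟨(b + (π.length - m)) % π.length, ⟨Nat.mod_lt _ h0, ?_⟩, ?_⟩
    · set a := (b + (π.length - m)) % π.length with hadef
      have ha : a < π.length := Nat.mod_lt _ h0
      rw [getD_rotate _ _ _ (Nat.mod_lt _ h0), getD_rotate _ _ _ ha]
      have e2 : (a + m) % π.length = b := by
        rw [hadef, Nat.mod_add_mod]
        have : b + (π.length - m) + m = b + π.length := by omega
        rw [this, Nat.add_mod_right, Nat.mod_eq_of_lt h1]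
      have e1 : ((a + 1) % π.length + m) % π.length = (b + 1) % π.length := by
        calc ((a + 1) % π.length + m) % π.length = (a + 1 + m) % π.length :=
              Nat.mod_add_mod _ _ _
          _ = (a + m + 1) % π.length := by ring_nf
          _ = ((a + m) % π.length + 1) % π.length := (Nat.mod_add_mod _ _ _).symm
          _ = (b + 1) % π.length := by rw [e2]
      rw [e1, e2]
      exact h2
    · rw [Nat.mod_add_mod]
      have : b + (π.length - m) + m = b + π.length := by omega
      rw [this, Nat.add_mod_right, Nat.mod_eq_of_lt h1]

lemma cdes_rotate (π : List ℕ) (k : ℕ) : cdes (π.rotate k) = cdes π := by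
  rw [cdes_eq_cdes', cdes_eq_cdes', cdes'_rotate]

lemma cdes_eq_des_add (π : List ℕ) : cdes π = des π + Wr π := by
  rcases Nat.eq_zero_or_pos π.length with h0 | h0
  · rw [List.eq_nil_of_length_eq_zero h0]
    simp [cdes, des, Wr, cDes, Des]
  unfold cdes des cDes Des Wr
  have hicc : Finset.Icc 1 π.length = insert π.length (Finset.Icc 1 (π.length - 1)) := by
    ext i; simp only [Finset.mem_Icc, Finset.mem_insert]; omega
  rw [hicc, Finset.filter_insert]
  have hfe : (Finset.Icc 1 (π.length - 1)).filter
      (fun i => π.getD (i % π.length) 0 < π.getD (i - 1) 0) =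
      (Finset.Icc 1 (π.length - 1)).filter (fun i => π.getD i 0 < π.getD (i - 1) 0) := by
    apply Finset.filter_congr
    intro i hi
    simp only [Finset.mem_Icc] at hi
    rw [Nat.mod_eq_of_lt (by omega)]
  rw [hfe]
  have hnm : π.length ∉ (Finset.Icc 1 (π.length - 1)).filter
      (fun i => π.getD i 0 < π.getD (i - 1) 0) := by
    simp only [Finset.mem_filter, Finset.mem_Icc]; omega
  have hmod : π.length % π.length = 0 := Nat.mod_self _
  split_ifs with h1 h2 h2
  · rw [Finset.card_insert_of_notMem hnm]
  · exact absurd (by rwa [hmod] at h1) h2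
  · exact absurd (by rwa [hmod]) h1
  · rfl

lemma wr_le_one (π : List ℕ) : Wr π ≤ 1 := by unfold Wr; split <;> omega

lemma sum_wr (π : List ℕ) :
    ∑ i ∈ Finset.range π.length, Wr (π.rotate i) = cdes' π := by
  rcases Nat.eq_zero_or_pos π.length with h0 | h0
  · simp [h0, cdes']
  have hwr : ∀ i ∈ Finset.range π.length, Wr (π.rotate i) =
      if π.getD (i % π.length) 0 < π.getD ((π.length - 1 + i) % π.length) 0 then 1 else 0 := by
    intro i hi
    simp only [Finset.mem_range] at hi
    unfold Wr
    rw [List.length_rotate, getD_rotate _ _ _ (by omega), getD_rotate _ _ _ (by omega),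
      Nat.zero_add]
  rw [Finset.sum_congr rfl hwr, Finset.sum_boole]
  unfold cdes'
  norm_cast
  apply Finset.card_bij (fun i _ => (π.length - 1 + i) % π.length)
  · intro a ha
    simp only [Finset.mem_filter, Finset.mem_range] at *
    obtain ⟨h1, h2⟩ := ha
    refine ⟨Nat.mod_lt _ h0, ?_⟩
    have e1 : ((π.length - 1 + a) % π.length + 1) % π.length = a := by
      rw [Nat.mod_add_mod]
      have : π.length - 1 + a + 1 = a + π.length := by omega
      rw [this, Nat.add_mod_right, Nat.mod_eq_of_lt h1]
    rw [e1]
    rwa [Nat.mod_eq_of_lt h1] at h2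
  · intro a ha b hb h
    simp only [Finset.mem_filter, Finset.mem_range] at *
    have h2 : a % π.length = b % π.length :=
      Nat.ModEq.add_left_cancel' (π.length - 1) h
    rwa [Nat.mod_eq_of_lt ha.1, Nat.mod_eq_of_lt hb.1] at h2
  · intro b hb
    simp only [Finset.mem_filter, Finset.mem_range] at *
    obtain ⟨h1, h2⟩ := hb
    have e2 : (π.length - 1 + (b + 1) % π.length) % π.length = b := by
      rw [Nat.add_mod_mod]
      have : π.length - 1 + (b + 1) = b + π.length := by omega
      rw [this, Nat.add_mod_right, Nat.mod_eq_of_lt h1]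
    refine ⟨(b + 1) % π.length, ⟨Nat.mod_lt _ h0, ?_⟩, e2⟩
    rw [e2, Nat.mod_eq_of_lt (Nat.mod_lt _ (by omega : 0 < π.length))]
    exact h2

lemma binary_canon (s : Multiset ℕ) (hs : ∀ x ∈ s, x ≤ 1) :
    s = Multiset.replicate (Multiset.card s - s.sum) 0 + Multiset.replicate s.sum 1 := by
  induction s using Multiset.induction_on with
  | empty => simp
  | cons a s ih =>
    have ha : a ≤ 1 := hs a (Multiset.mem_cons_self a s)
    have hs' : ∀ x ∈ s, x ≤ 1 := fun x hx => hs x (Multiset.mem_cons_of_mem hx)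
    have hsum_le : s.sum ≤ Multiset.card s := by
      have := Multiset.sum_le_card_nsmul s 1 hs'
      simpa using this
    interval_cases a
    · rw [Multiset.sum_cons, Multiset.card_cons, Nat.zero_add]
      have : Multiset.card s + 1 - s.sum = (Multiset.card s - s.sum) + 1 := by omega
      rw [this, Multiset.replicate_succ, Multiset.cons_add]
      exact congrArg _ (ih hs')
    · rw [Multiset.sum_cons, Multiset.card_cons]
      have : Multiset.card s + 1 - (1 + s.sum) = Multiset.card s - s.sum := by omega
      rw [this]
      have : (1 : ℕ) + s.sum = s.sum + 1 := by omega
      rw [this, Multiset.replicate_succ, Multiset.add_cons]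
      exact congrArg _ (ih hs')

lemma binary_multiset_eq (s t : Multiset ℕ) (hs : ∀ x ∈ s, x ≤ 1) (ht : ∀ x ∈ t, x ≤ 1)
    (hcard : Multiset.card s = Multiset.card t) (hsum : s.sum = t.sum) : s = t := by
  rw [binary_canon s hs, binary_canon t ht, hcard, hsum]

lemma cycStat_des_eq_map (π : List ℕ) :
    cycStat des π = Multiset.map (fun w => cdes π - w)
      ((Multiset.range π.length).map fun i => Wr (π.rotate i)) := by
  unfold cycStat
  rw [Multiset.map_map]
  apply Multiset.map_congr rfl
  intro i _
  have h1 := cdes_eq_des_add (π.rotate i)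
  have h2 := cdes_rotate π i
  simp only [Function.comp_apply]
  omega

lemma multiset_range_map_sum (n : ℕ) (f : ℕ → ℕ) :
    ((Multiset.range n).map f).sum = ∑ i ∈ Finset.range n, f i := rfl

lemma cdes_small (π : List ℕ) (h : π.length ≤ 1) : cdes π = 0 := by
  unfold cdes cDes
  rcases Nat.le_one_iff_eq_zero_or_eq_one.mp h with h0 | h1
  · rw [h0]; simp
  · rw [h1]
    rw [Finset.Icc_self, Finset.filter_singleton]
    simp

lemma cycStat_des_sum (τ : List ℕ) :
    (cycStat des τ).sum = τ.length * cdes τ - cdes τ := by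
  rw [cycStat_des_eq_map τ, Multiset.map_map, multiset_range_map_sum]
  have hW : ∑ i ∈ Finset.range τ.length, Wr (τ.rotate i) = cdes τ := by
    rw [sum_wr, ← cdes_eq_cdes']
  simp only [Function.comp_apply]
  rcases Nat.eq_zero_or_pos (cdes τ) with hc | hc
  · rw [hc]; simp
  · rw [Finset.sum_tsub_distrib _ (fun i _ => le_trans (wr_le_one _) hc),
      Finset.sum_const, Finset.card_range, smul_eq_mul, hW]

theorem des_cdes_equivalent' (π σ : List ℕ)
    (hlen : π.length = σ.length) :
    cycStat des π = cycStat des σ ↔ cdes π = cdes σ := by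
  constructor
  · intro h
    rcases le_or_gt π.length 1 with hn | hn
    · rw [cdes_small π hn, cdes_small σ (hlen ▸ hn)]
    · have hs := congrArg Multiset.sum h
      rw [cycStat_des_sum, cycStat_des_sum, ← hlen] at hs
      rw [← Nat.sub_one_mul, ← Nat.sub_one_mul] at hs
      exact Nat.eq_of_mul_eq_mul_left (by omega) hs
  · intro h
    rw [cycStat_des_eq_map, cycStat_des_eq_map, h]
    congr 1
    apply binary_multiset_eq
    · intro x hx
      obtain ⟨i, _, rfl⟩ := Multiset.mem_map.mp hx
      exact wr_le_one _
    · intro x hx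
      obtain ⟨i, _, rfl⟩ := Multiset.mem_map.mp hx
      exact wr_le_one _
    · simp [hlen]
    · rw [multiset_range_map_sum, multiset_range_map_sum, sum_wr, sum_wr,
        ← cdes_eq_cdes', ← cdes_eq_cdes', h]

/-- The cyclic statistics `des` and `cdes` are equivalent. -/
theorem des_cdes_equivalent (π σ : List ℕ) (hπ : IsPerm π) (hσ : IsPerm σ)
    (hlen : π.length = σ.length) :
    cycStat des π = cycStat des σ ↔ cdes π = cdes σ := by
  exact des_cdes_equivalent' π σ hlen
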